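/- Let w(p) = Π(n(p), m(p)) − ((2+p)(1+2p)/(3(1+p)²))·K(m(p)) with m(p) = √(p³(2+p)/(1+2p)) and n(p) = −p²/(1+2p). Then for 0 < p < 1, w satisfies the first-order linear ODE w′(p) = −((1+3p)/((1+p)(1+2p)))·w(p). -/

import Mathlib

open Real

/-- Complete elliptic integral of the first kind. -/
noncomputable def K (z : ℝ) : ℝ :=
  ∫ x in (0:ℝ)..1, 1 / Real.sqrt ((1 - x ^ 2) * (1 - z ^ 2 * x ^ 2))

/-- Complete elliptic integral of the third kind. -/
noncomputable def Pi3 (n z : ℝ) : ℝ :=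
  ∫ x in (0:ℝ)..1, 1 / ((1 - n * x ^ 2) * Real.sqrt ((1 - x ^ 2) * (1 - z ^ 2 * x ^ 2)))

/-- The modulus `m(p)`. -/
noncomputable def mm (p : ℝ) : ℝ := Real.sqrt (p ^ 3 * (2 + p) / (1 + 2 * p))

/-- The parameter `n(p)`. -/
noncomputable def nn (p : ℝ) : ℝ := -p ^ 2 / (1 + 2 * p)

/-- The function `w(p) = Π(n(p), m(p)) − ((2+p)(1+2p)/(3(1+p)²))·K(m(p))`. -/
noncomputable def w (p : ℝ) : ℝ :=
  Pi3 (nn p) (mm p) - (2 + p) * (1 + 2 * p) / (3 * (1 + p) ^ 2) * K (mm p)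

open MeasureTheory intervalIntegral Set

/-!
On `0 < p < 1` the function `w` has the closed form `π √(1 + 2p) / (6 (1 + p)²)`, from which the
differential equation follows by differentiation. The closed form comes from an elementary
antiderivative: with `P = tanNum p` and `R = tanDenSq p`, the combined integrand of `w` is
`√(1 + 2p) / (3 (1 + p)²)` times the derivative of the angle `θ(x) = arctan (P(x) / √R(x))`.
As `P > 0` on `(0, 1]`, `R > 0` on `[0, 1)`, `P(0) = 0` and `R(1) = 0`, this angle runs from `0`
to `π / 2` over `[0, 1]`.
-/

theorem hasDerivAt_arctan_div {u v : ℝ → ℝ} {u' v' x : ℝ} (hu : HasDerivAt u u' x)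
    (hv : HasDerivAt v v' x) (hvx : v x ≠ 0) :
    HasDerivAt (fun y => arctan (u y / v y)) ((u' * v x - u x * v') / (u x ^ 2 + v x ^ 2)) x :=
  (hu.div hv hvx).arctan.congr_deriv (by rw [Pi.div_apply]; field_simp; ring)

theorem integral_eq_mul_pi_div_two_of_angle {u v u' v' f : ℝ → ℝ} {a b c : ℝ} (hab : a < b)
    (hu : ContinuousOn u (Icc a b)) (hv : ContinuousOn v (Icc a b))
    (hu' : ∀ x ∈ Ioo a b, HasDerivAt u (u' x) x) (hv' : ∀ x ∈ Ioo a b, HasDerivAt v (v' x) x)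
    (hua : u a = 0) (hvb : v b = 0)
    (hu_pos : ∀ x ∈ Ioc a b, 0 < u x) (hv_pos : ∀ x ∈ Ico a b, 0 < v x)
    (hf : ∀ x ∈ Ioo a b, f x = c * ((u' x * v x - u x * v' x) / (u x ^ 2 + v x ^ 2)))
    (hfi : IntervalIntegrable f volume a b) :
    ∫ x in a..b, f x = c * (π / 2) := by
  -- `arctan (u / v)` is only continuous away from `b` and `arctan (v / u)` away from `a`
  obtain ⟨m, ham, hmb⟩ := exists_between hab
  have hm : m ∈ Icc a b := ⟨ham.le, hmb.le⟩
  have hfi_left : IntervalIntegrable f volume a m :=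
    hfi.mono_set (uIcc_subset_uIcc_left (by rwa [uIcc_of_le hab.le]))
  have hfi_right : IntervalIntegrable f volume m b :=
    hfi.mono_set (uIcc_subset_uIcc_right (by rwa [uIcc_of_le hab.le]))
  have h_left : ∫ x in a..m, f x = c * arctan (u m / v m) := by
    have hv_ne : ∀ x ∈ Icc a m, v x ≠ 0 := fun x hx => (hv_pos x ⟨hx.1, hx.2.trans_lt hmb⟩).ne'
    rw [integral_eq_sub_of_hasDerivAt_of_le ham.le (f := fun x => c * arctan (u x / v x))]
    · simp [hua]
    · exact continuousOn_const.mul (continuous_arctan.comp_continuousOn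
        ((hu.mono (Icc_subset_Icc_right hmb.le)).div (hv.mono (Icc_subset_Icc_right hmb.le)) hv_ne))
    · intro x hx
      have hxab : x ∈ Ioo a b := ⟨hx.1, hx.2.trans hmb⟩
      rw [hf x hxab]
      exact (hasDerivAt_arctan_div (hu' x hxab) (hv' x hxab)
        (hv_ne x (Ioo_subset_Icc_self hx))).const_mul c
    · exact hfi_left
  have h_right : ∫ x in m..b, f x = c * arctan (v m / u m) := by
    have hu_ne : ∀ x ∈ Icc m b, u x ≠ 0 := fun x hx => (hu_pos x ⟨ham.trans_le hx.1, hx.2⟩).ne'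
    rw [integral_eq_sub_of_hasDerivAt_of_le hmb.le (f := fun x => -(c * arctan (v x / u x)))]
    · simp [hvb]
    · exact (continuousOn_const.mul (continuous_arctan.comp_continuousOn
        ((hv.mono (Icc_subset_Icc_left ham.le)).div (hu.mono (Icc_subset_Icc_left ham.le))
          hu_ne))).neg
    · intro x hx
      have hxab : x ∈ Ioo a b := ⟨ham.trans hx.1, hx.2⟩
      refine ((hasDerivAt_arctan_div (hv' x hxab) (hu' x hxab)
        (hu_ne x (Ioo_subset_Icc_self hx))).const_mul c).neg.congr_deriv ?_
      rw [hf x hxab]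
      ring
    · exact hfi_right
  rw [← integral_add_adjacent_intervals hfi_left hfi_right, h_left, h_right, ← inv_div,
    arctan_inv_of_pos (div_pos (hv_pos m ⟨ham.le, hmb⟩) (hu_pos m ⟨ham, hmb.le⟩))]
  ring

theorem intervalIntegrable_one_div_sqrt_one_sub_sq :
    IntervalIntegrable (fun x : ℝ => 1 / √(1 - x ^ 2)) volume 0 1 := by
  refine intervalIntegrable_deriv_of_nonneg continuous_arcsin.continuousOn (fun x hx => ?_)
    (fun x _ => by positivity)
  simp only [zero_le_one, min_eq_left, max_eq_right, mem_Ioo] at hx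
  exact hasDerivAt_arcsin (by linarith) hx.2.ne

theorem intervalIntegrable_ellipticPi_integrand {n z : ℝ} (hn : n ≤ 0) (hz : z ^ 2 < 1) :
    IntervalIntegrable (fun x => 1 / ((1 - n * x ^ 2) * √((1 - x ^ 2) * (1 - z ^ 2 * x ^ 2))))
      volume 0 1 := by
  refine (intervalIntegrable_one_div_sqrt_one_sub_sq.const_mul (1 / √(1 - z ^ 2))).mono_fun'
    (Measurable.aestronglyMeasurable (by fun_prop)) ?_
  rw [uIoc_of_le zero_le_one]
  refine (ae_restrict_iff' measurableSet_Ioc).2 (.of_forall fun x ⟨hx0, hx1⟩ => ?_)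
  dsimp only
  rcases hx1.lt_or_eq with hx1 | rfl
  · have hx2 : 0 < 1 - x ^ 2 := by nlinarith
    have hn' : 1 ≤ 1 - n * x ^ 2 := by nlinarith
    have hsqrt : √(1 - z ^ 2) * √(1 - x ^ 2) ≤ √((1 - x ^ 2) * (1 - z ^ 2 * x ^ 2)) := by
      rw [← sqrt_mul (by linarith), mul_comm]
      exact sqrt_le_sqrt (mul_le_mul_of_nonneg_left
        (by nlinarith [mul_nonneg (sq_nonneg z) hx2.le]) hx2.le)
    have hpos : 0 < √(1 - z ^ 2) * √(1 - x ^ 2) :=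
      mul_pos (sqrt_pos.2 (by linarith)) (sqrt_pos.2 hx2)
    rw [Real.norm_of_nonneg (by positivity), one_div_mul_one_div]
    calc 1 / ((1 - n * x ^ 2) * √((1 - x ^ 2) * (1 - z ^ 2 * x ^ 2)))
        ≤ 1 / √((1 - x ^ 2) * (1 - z ^ 2 * x ^ 2)) :=
          one_div_le_one_div_of_le (hpos.trans_le hsqrt) (le_mul_of_one_le_left (sqrt_nonneg _) hn')
      _ ≤ 1 / (√(1 - z ^ 2) * √(1 - x ^ 2)) := one_div_le_one_div_of_le hpos hsqrt
  · simp

theorem intervalIntegrable_ellipticK_integrand {z : ℝ} (hz : z ^ 2 < 1) :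
    IntervalIntegrable (fun x => 1 / √((1 - x ^ 2) * (1 - z ^ 2 * x ^ 2))) volume 0 1 := by
  simpa using intervalIntegrable_ellipticPi_integrand le_rfl hz

theorem mm_sq {p : ℝ} (hp : 0 ≤ p) : mm p ^ 2 = p ^ 3 * (2 + p) / (1 + 2 * p) :=
  sq_sqrt (by positivity)

theorem mm_sq_lt_one {p : ℝ} (hp : p ∈ Ioo 0 1) : mm p ^ 2 < 1 := by
  obtain ⟨hp0, hp1⟩ := hp
  rw [mm_sq hp0.le, div_lt_one (by linarith)]
  nlinarith [mul_pos (sub_pos.2 hp1) (pow_pos (by linarith : (0 : ℝ) < 1 + p) 3)]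

theorem nn_nonpos {p : ℝ} (hp : 0 ≤ p) : nn p ≤ 0 :=
  div_nonpos_of_nonpos_of_nonneg (neg_nonpos.2 (sq_nonneg p)) (by linarith)

theorem one_sub_nn_mul_sq {p : ℝ} (hp : 0 ≤ p) (x : ℝ) :
    1 - nn p * x ^ 2 = (1 + 2 * p + p ^ 2 * x ^ 2) / (1 + 2 * p) := by
  rw [nn]
  field_simp
  ring

noncomputable def wIntegrand (p x : ℝ) : ℝ :=
  1 / ((1 - nn p * x ^ 2) * √((1 - x ^ 2) * (1 - mm p ^ 2 * x ^ 2))) -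
    (2 + p) * (1 + 2 * p) / (3 * (1 + p) ^ 2) * (1 / √((1 - x ^ 2) * (1 - mm p ^ 2 * x ^ 2)))

theorem intervalIntegrable_wIntegrand {p : ℝ} (hp : p ∈ Ioo 0 1) :
    IntervalIntegrable (wIntegrand p) volume 0 1 :=
  (intervalIntegrable_ellipticPi_integrand (nn_nonpos hp.1.le) (mm_sq_lt_one hp)).sub
    ((intervalIntegrable_ellipticK_integrand (mm_sq_lt_one hp)).const_mul _)

theorem w_eq_integral_wIntegrand {p : ℝ} (hp : p ∈ Ioo 0 1) :
    w p = ∫ x in (0 : ℝ)..1, wIntegrand p x := by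
  rw [w, Pi3, K, ← intervalIntegral.integral_const_mul, ← integral_sub
    (intervalIntegrable_ellipticPi_integrand (nn_nonpos hp.1.le) (mm_sq_lt_one hp))
    ((intervalIntegrable_ellipticK_integrand (mm_sq_lt_one hp)).const_mul _)]
  rfl

def tanNum (p x : ℝ) : ℝ := x * ((1 + p) ^ 3 + p ^ 3 * (1 - x ^ 2))

def tanDenSq (p x : ℝ) : ℝ :=
  (1 + 2 * p) ^ 2 * (1 - x ^ 2) * (1 + 2 * p - p ^ 3 * (2 + p) * x ^ 2)

theorem tanNum_pos {p x : ℝ} (hp : 0 ≤ p) (hx : x ∈ Ioc 0 1) : 0 < tanNum p x := by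
  obtain ⟨hx0, hx1⟩ := hx
  have : 0 ≤ 1 - x ^ 2 := by nlinarith
  unfold tanNum
  positivity

theorem tanDenSq_pos {p x : ℝ} (hp : p ∈ Ioo 0 1) (hx : x ^ 2 < 1) : 0 < tanDenSq p x := by
  obtain ⟨hp0, hp1⟩ := hp
  have h1 : 0 < 1 - x ^ 2 := by linarith
  have h2 : p ^ 3 * (2 + p) * x ^ 2 < 1 + 2 * p := by
    nlinarith [mul_pos (sub_pos.2 hp1) (pow_pos (by linarith : (0 : ℝ) < 1 + p) 3),
      mul_le_mul_of_nonneg_left hx.le (by positivity : (0 : ℝ) ≤ p ^ 3 * (2 + p))]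
  have h3 : 0 < 1 + 2 * p - p ^ 3 * (2 + p) * x ^ 2 := by linarith
  unfold tanDenSq
  have : 0 < 1 + 2 * p := by linarith
  positivity

theorem hasDerivAt_tanNum (p x : ℝ) :
    HasDerivAt (tanNum p) ((1 + p) ^ 3 + p ^ 3 * (1 - 3 * x ^ 2)) x := by
  refine ((hasDerivAt_id x).mul (((hasDerivAt_pow 2 x).const_sub 1).const_mul (p ^ 3)
    |>.const_add ((1 + p) ^ 3))).congr_deriv ?_
  norm_num
  ring

theorem hasDerivAt_tanDenSq (p x : ℝ) :
    HasDerivAt (tanDenSq p) (-2 * (1 + 2 * p) ^ 2 * x *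
      (1 + 2 * p - p ^ 3 * (2 + p) * x ^ 2 + p ^ 3 * (2 + p) * (1 - x ^ 2))) x := by
  have h := hasDerivAt_pow 2 x
  refine (((h.const_sub 1).const_mul ((1 + 2 * p) ^ 2)).mul
    ((h.const_mul (p ^ 3 * (2 + p))).const_sub (1 + 2 * p))).congr_deriv ?_
  norm_num
  ring

theorem sqrt_ellipticDisc_mm {p : ℝ} (hp : 0 ≤ p) (x : ℝ) :
    √((1 - x ^ 2) * (1 - mm p ^ 2 * x ^ 2)) = √(tanDenSq p x) / ((1 + 2 * p) * √(1 + 2 * p)) := by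
  have hs : 0 < 1 + 2 * p := by linarith
  have h : (1 - x ^ 2) * (1 - mm p ^ 2 * x ^ 2) = tanDenSq p x / ((1 + 2 * p) ^ 2 * (1 + 2 * p)) := by
    rw [mm_sq hp, tanDenSq]
    field_simp
  rw [h, sqrt_div' _ (by positivity), sqrt_mul (by positivity), sqrt_sq hs.le]

theorem wIntegrand_eq {p x : ℝ} (hp : p ∈ Ioo 0 1) (hx : x ^ 2 < 1) :
    wIntegrand p x = √(1 + 2 * p) / (3 * (1 + p) ^ 2) *
      ((deriv (tanNum p) x * √(tanDenSq p x) - tanNum p x * deriv (fun y => √(tanDenSq p y)) x) /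
        (tanNum p x ^ 2 + √(tanDenSq p x) ^ 2)) := by
  have hR := tanDenSq_pos hp hx
  have hs : 0 < 1 + 2 * p := by linarith [hp.1]
  have hp1 : 0 < 1 + p := by linarith [hp.1]
  rw [(hasDerivAt_tanNum p x).deriv, ((hasDerivAt_tanDenSq p x).sqrt hR.ne').deriv,
    wIntegrand, sqrt_ellipticDisc_mm hp.1.le, one_sub_nn_mul_sq hp.1.le]
  have hr : 0 < √(tanDenSq p x) := sqrt_pos.2 hR
  have ht : 0 < √(1 + 2 * p) := sqrt_pos.2 hs
  have hr2 := sq_sqrt hR.le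
  generalize √(tanDenSq p x) = r at *
  generalize √(1 + 2 * p) = t at *
  field_simp
  rw [hr2]
  unfold tanNum tanDenSq
  ring

noncomputable def wClosedForm (p : ℝ) : ℝ := π / 6 * √(1 + 2 * p) / (1 + p) ^ 2

theorem w_eq_wClosedForm {p : ℝ} (hp : p ∈ Ioo 0 1) : w p = wClosedForm p := by
  have hsq_lt_one : ∀ x ∈ Ico (0 : ℝ) 1, x ^ 2 < 1 := fun x hx => by nlinarith [hx.1, hx.2]
  have hv_deriv : ∀ x ∈ Ioo (0 : ℝ) 1, HasDerivAt (fun y => √(tanDenSq p y))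
      (deriv (fun y => √(tanDenSq p y)) x) x := fun x hx =>
    ((hasDerivAt_tanDenSq p x).sqrt
      (tanDenSq_pos hp (hsq_lt_one x (Ioo_subset_Ico_self hx))).ne').differentiableAt.hasDerivAt
  have hu_cont : Continuous (tanNum p) :=
    continuous_iff_continuousAt.2 fun x => (hasDerivAt_tanNum p x).continuousAt
  have hv_cont : Continuous (tanDenSq p) :=
    continuous_iff_continuousAt.2 fun x => (hasDerivAt_tanDenSq p x).continuousAt
  rw [w_eq_integral_wIntegrand hp, integral_eq_mul_pi_div_two_of_angle zero_lt_one
    hu_cont.continuousOn hv_cont.sqrt.continuousOn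
    (fun x _ => (hasDerivAt_tanNum p x).differentiableAt.hasDerivAt) hv_deriv
    (by simp [tanNum]) (by simp [tanDenSq]) (fun x hx => tanNum_pos hp.1.le hx)
    (fun x hx => sqrt_pos.2 (tanDenSq_pos hp (hsq_lt_one x hx)))
    (fun x hx => wIntegrand_eq hp (hsq_lt_one x (Ioo_subset_Ico_self hx)))
    (intervalIntegrable_wIntegrand hp), wClosedForm]
  have : 0 < 1 + p := by linarith [hp.1]
  field_simp
  ring

theorem hasDerivAt_wClosedForm {p : ℝ} (hp : 0 < 1 + 2 * p) :
    HasDerivAt wClosedForm (-((1 + 3 * p) / ((1 + p) * (1 + 2 * p))) * wClosedForm p) p := by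
  have hp1 : 0 < 1 + p := by linarith
  have hsqrt := (((hasDerivAt_id p).const_mul 2).const_add 1).sqrt hp.ne'
  have hsq := ((hasDerivAt_id p).const_add 1).fun_pow 2
  refine ((hsqrt.const_mul (π / 6)).div hsq (by positivity)).congr_deriv ?_
  have ht := sq_sqrt hp.le
  simp only [wClosedForm, id]
  field_simp
  rw [ht]
  ring

theorem stmt2 :
    ∀ p ∈ Set.Ioo (0:ℝ) 1,
      HasDerivAt w (-((1 + 3 * p) / ((1 + p) * (1 + 2 * p))) * w p) p := by
  intro p hp
  have hw : w =ᶠ[nhds p] wClosedForm :=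
    Filter.eventually_of_mem (Ioo_mem_nhds hp.1 hp.2) fun q hq => w_eq_wClosedForm hq
  rw [w_eq_wClosedForm hp]
  exact (hasDerivAt_wClosedForm (by linarith [hp.1])).congr_of_eventuallyEq hw
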